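/- arXiv:2304.07749 — 3 statements merged into one kernel-verified Lean document; each statement's English description precedes it below -/
import Mathlib

section
/- Let k ≥ 1, n = 2k, let W be a module over the symplectic Lie algebra 𝔰𝔭_{2k}(ℂ), and fix ζ ∈ ℂⁿ. For r ∈ ℤⁿ define the linear operator ρ(r) : W → W by ρ(r)(w) = (r·r̄ᵀ)·w + ⟨r̄, ζ⟩·w, where (r·r̄ᵀ)·w denotes the action of the matrix r·r̄ᵀ ∈ 𝔰𝔭_{2k}(ℂ) on W. Then for all r, s ∈ ℤⁿ the operators satisfy [ρ(r), ρ(s)] = ⟨r̄, s⟩ · ( ρ(r+s) − ρ(r) − ρ(s) ). (These are exactly the defining bracket relations of the Lie algebra H'_n(m) with basis {I(r̄,r)}, so every 𝔰𝔭_{2k}(ℂ)-module becomes an H'_n(m)-module in this way.) -/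
/-!
For `u v ∈ ℂ^{2k}` one has `(u ūᵀ)(v v̄ᵀ) = ⟨ū, v⟩ u v̄ᵀ`, and `⟨v̄, u⟩ = -⟨ū, v⟩` because `J` is
skew. Hence `⁅u ūᵀ, v v̄ᵀ⁆ = ⟨ū, v⟩ (u v̄ᵀ + v ūᵀ)`, which is `⟨ū, v⟩` times
`w w̄ᵀ - u ūᵀ - v v̄ᵀ` with `w = u + v`. Pushing this through `act` and adding the scalar `⟨r̄, ζ⟩`, which is
central and additive in `r`, gives the relation.
-/

noncomputable section

open scoped BigOperators Matrix

attribute [local instance 100] LieRing.ofAssociativeRing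

/-- For `r ∈ ℂ^{2k}` (indexed by `Fin k ⊕ Fin k`), `bar r = r̄ = (r_{k+1},…,r_{2k},−r_1,…,−r_k)`. -/
def bar {k : ℕ} (r : Fin k ⊕ Fin k → ℂ) : Fin k ⊕ Fin k → ℂ :=
  Sum.elim (fun i => r (Sum.inr i)) (fun i => - r (Sum.inl i))

/-- The standard symmetric bilinear form `⟨u, v⟩ = ∑ i, u i * v i` on `ℂ^{2k}`. -/
def pair {k : ℕ} (u v : Fin k ⊕ Fin k → ℂ) : ℂ := ∑ i, u i * v i

/-- The coercion `ℤ^{2k} ⊆ ℂ^{2k}`. -/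
def zc {k : ℕ} (r : Fin k ⊕ Fin k → ℤ) : Fin k ⊕ Fin k → ℂ := fun i => (r i : ℂ)

/-- The standard symplectic structure matrix `J = [[0, I_k],[−I_k, 0]]`. -/
def Jmat (k : ℕ) : Matrix (Fin k ⊕ Fin k) (Fin k ⊕ Fin k) ℂ :=
  Matrix.fromBlocks 0 1 (-1) 0

/-- The symplectic Lie algebra `𝔰𝔭_{2k}(ℂ) = {A : Aᵀ J + J A = 0}`. -/
def sp (k : ℕ) : LieSubalgebra ℂ (Matrix (Fin k ⊕ Fin k) (Fin k ⊕ Fin k) ℂ) :=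
  skewAdjointMatricesLieSubalgebra (Jmat k)

/-- The outer product `r·r̄ᵀ` lies in `𝔰𝔭_{2k}(ℂ)`. -/
lemma outer_mem_sp (k : ℕ) (r : Fin k ⊕ Fin k → ℂ) :
    Matrix.vecMulVec r (bar r) ∈ sp k := by
  rw [sp, mem_skewAdjointMatricesLieSubalgebra, mem_skewAdjointMatricesSubmodule]
  show _ᵀ * Jmat k = Jmat k * _
  ext i j
  simp only [Matrix.mul_apply, Matrix.transpose_apply, Matrix.vecMulVec_apply, Jmat,
    Matrix.fromBlocks, Fintype.sum_sum_type, Matrix.neg_apply, Matrix.one_apply,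
    Matrix.zero_apply, Matrix.of_apply, bar]
  cases i <;> cases j <;>
    simp [Sum.elim, Matrix.one_apply, Finset.sum_ite_eq, Finset.sum_ite_eq', mul_comm]

open Matrix

lemma lie_add_smul_one_eq_of_lie_eq {R L A : Type*} [CommRing R] [LieRing L] [LieAlgebra R L]
    [Ring A] [Algebra R A] (f : L →ₗ⁅R⁆ A) {x y z : L} {a b c : R}
    (h : ⁅x, y⁆ = a • (z - x - y)) :
    ⁅f x + b • 1, f y + c • 1⁆ = a • (f z + (b + c) • 1 - (f x + b • 1) - (f y + c • 1)) := by
  have lie_scalar : ∀ (u : A) (d : R), ⁅u, d • (1 : A)⁆ = 0 := fun u d => by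
    simp [Ring.lie_def]
  have scalar_lie : ∀ (u : A) (d : R), ⁅d • (1 : A), u⁆ = 0 := fun u d => by
    rw [← lie_skew, lie_scalar, neg_zero]
  rw [lie_add, add_lie, add_lie, lie_scalar, scalar_lie, scalar_lie, ← f.map_lie, h]
  simp only [map_smul, map_sub]
  module

lemma pair_eq_dotProduct {k : ℕ} (u v : Fin k ⊕ Fin k → ℂ) : pair u v = u ⬝ᵥ v := rfl

lemma bar_add {k : ℕ} (u v : Fin k ⊕ Fin k → ℂ) : bar (u + v) = bar u + bar v := by
  ext (i | i) <;> simp [bar, add_comm]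

lemma zc_add {k : ℕ} (r s : Fin k ⊕ Fin k → ℤ) : zc (r + s) = zc r + zc s := by
  ext i; simp [zc]

lemma pair_bar_swap {k : ℕ} (u v : Fin k ⊕ Fin k → ℂ) :
    pair (bar v) u = -pair (bar u) v := by
  simp only [pair, Fintype.sum_sum_type, bar, Sum.elim_inl, Sum.elim_inr, neg_mul,
    Finset.sum_neg_distrib]
  simp only [mul_comm]
  ring

lemma lie_vecMulVec_bar {k : ℕ} (u v : Fin k ⊕ Fin k → ℂ) :
    ⁅vecMulVec u (bar u), vecMulVec v (bar v)⁆ =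
      pair (bar u) v • (vecMulVec (u + v) (bar (u + v))
        - vecMulVec u (bar u) - vecMulVec v (bar v)) := by
  rw [Ring.lie_def, vecMulVec_mul_vecMulVec, vecMulVec_mul_vecMulVec, ← pair_eq_dotProduct,
    ← pair_eq_dotProduct, pair_bar_swap u v, bar_add, add_vecMulVec, vecMulVec_add,
    vecMulVec_add, vecMulVec_smul, vecMulVec_smul]
  module

def outerSp (k : ℕ) (u : Fin k ⊕ Fin k → ℂ) : sp k := ⟨vecMulVec u (bar u), outer_mem_sp k u⟩

lemma lie_outerSp (k : ℕ) (u v : Fin k ⊕ Fin k → ℂ) :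
    ⁅outerSp k u, outerSp k v⁆ =
      pair (bar u) v • (outerSp k (u + v) - outerSp k u - outerSp k v) :=
  Subtype.ext (lie_vecMulVec_bar u v)

theorem stmt7_general (k : ℕ) (W : Type*) [AddCommGroup W] [Module ℂ W]
    (act : sp k →ₗ⁅ℂ⁆ Module.End ℂ W) (ζ : Fin k ⊕ Fin k → ℂ)
    (ρ : (Fin k ⊕ Fin k → ℤ) → Module.End ℂ W)
    (hρ : ∀ r : Fin k ⊕ Fin k → ℤ,
      ρ r = act ⟨Matrix.vecMulVec (zc r) (bar (zc r)), outer_mem_sp k (zc r)⟩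
              + pair (bar (zc r)) ζ • (1 : Module.End ℂ W)) :
    ∀ r s : Fin k ⊕ Fin k → ℤ,
      ⁅ρ r, ρ s⁆ = pair (bar (zc r)) (zc s) • (ρ (r + s) - ρ r - ρ s) := by
  intro r s
  have hpair : pair (bar (zc (r + s))) ζ = pair (bar (zc r)) ζ + pair (bar (zc s)) ζ := by
    simp only [pair_eq_dotProduct, zc_add, bar_add, add_dotProduct]
  rw [hρ, hρ, hρ, hpair]
  exact lie_add_smul_one_eq_of_lie_eq act (zc_add r s ▸ lie_outerSp k (zc r) (zc s))

/-- if `W` is a module over `𝔰𝔭_{2k}(ℂ)` (given by the Lie algebra morphism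
`act : 𝔰𝔭_{2k}(ℂ) → End(W)`), `ζ ∈ ℂⁿ`, and `ρ(r) = (r·r̄ᵀ)·(-) + ⟨r̄,ζ⟩·id` for `r ∈ ℤⁿ`,
then `[ρ(r), ρ(s)] = ⟨r̄,s⟩ (ρ(r+s) − ρ(r) − ρ(s))`. -/
theorem stmt7 (k : ℕ) (hk : 1 ≤ k) (W : Type*) [AddCommGroup W] [Module ℂ W]
    (act : sp k →ₗ⁅ℂ⁆ Module.End ℂ W) (ζ : Fin k ⊕ Fin k → ℂ)
    (ρ : (Fin k ⊕ Fin k → ℤ) → Module.End ℂ W)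
    (hρ : ∀ r : Fin k ⊕ Fin k → ℤ,
      ρ r = act ⟨Matrix.vecMulVec (zc r) (bar (zc r)), outer_mem_sp k (zc r)⟩
              + pair (bar (zc r)) ζ • (1 : Module.End ℂ W)) :
    ∀ r s : Fin k ⊕ Fin k → ℤ,
      ⁅ρ r, ρ s⁆ = pair (bar (zc r)) (zc s) • (ρ (r + s) - ρ r - ρ s) :=
  stmt7_general k W act ζ ρ hρ
end
end

section
/- Let k ≥ 1, n = 2k, fix positive integers m_1,…,m_n and let Γ = {r ∈ ℤⁿ : m_i divides r_i for all i}. Let W be a nonzero finite-dimensional ℂ-vector space and let I : Γ → End(W) satisfy I(0) = 0 and [I(r), I(s)] = ⟨r̄,s⟩ (I(r+s) − I(r) − I(s)) for all r, s ∈ Γ, and suppose W is irreducible for this family, i.e. the only subspaces of W invariant under all I(r) are 0 and W. Fix α, β ∈ ℂⁿ, and on L(W) = W ⊗ ℂ[Γ] (with pure tensors w ⊗ t^k, k ∈ Γ) define linear operators: for 0 ≠ r ∈ Γ, π(r)(w ⊗ t^k) = (I(r)w) ⊗ t^{r+k} + ⟨r̄, β + k⟩ w ⊗ t^{r+k}; for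 u ∈ ℂⁿ, δ(u)(w ⊗ t^k) = ⟨u, α + k⟩ w ⊗ t^k; and for r ∈ Γ, μ(r)(w ⊗ t^k) = w ⊗ t^{r+k}. Then the only subspaces of L(W) invariant under all of the operators π(r) (0 ≠ r ∈ Γ), δ(u) (u ∈ ℂⁿ) and μ(r) (r ∈ Γ) are 0 and L(W). -/
noncomputable section

open scoped BigOperators

/-- For `r ∈ ℤ^{2k}` (indexed by `Fin k ⊕ Fin k`), `barZ r = r̄ = (r_{k+1},…,r_{2k},−r_1,…,−r_k)`. -/
def barZ {k : ℕ} (r : Fin k ⊕ Fin k → ℤ) : Fin k ⊕ Fin k → ℤ :=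
  Sum.elim (fun i => r (Sum.inr i)) (fun i => - r (Sum.inl i))

/-- The standard pairing `⟨u,v⟩ = ∑ i, u i * v i` of integer vectors, valued in `ℂ`. -/
def pairZ {k : ℕ} (u v : Fin k ⊕ Fin k → ℤ) : ℂ := ∑ i, (u i : ℂ) * (v i : ℂ)

/-- The lattice `Γ = {r ∈ ℤⁿ : m_i ∣ r_i for all i}`. -/
def Gamma (k : ℕ) (m : Fin k ⊕ Fin k → ℕ) : AddSubgroup (Fin k ⊕ Fin k → ℤ) where
  carrier := {r | ∀ i, (m i : ℤ) ∣ r i}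
  add_mem' := by
    intro a b ha hb i
    simpa using dvd_add (ha i) (hb i)
  zero_mem' := by
    intro i
    simp
  neg_mem' := by
    intro a ha i
    simpa using (ha i).neg_right

/-- `π(r)`, for `0 ≠ r ∈ Γ`:  on `L(W) = W ⊗ ℂ[Γ]` (realized as `Γ →₀ W`),
`π(r)(w ⊗ t^p) = (I(r)w) ⊗ t^{r+p} + ⟨r̄, β + p⟩ w ⊗ t^{r+p}`. -/
def piOp {k : ℕ} {m : Fin k ⊕ Fin k → ℕ} {W : Type*} [AddCommGroup W] [Module ℂ W]
    (I : Gamma k m → Module.End ℂ W) (β : Fin k ⊕ Fin k → ℂ) (r : Gamma k m) :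
    (Gamma k m →₀ W) →ₗ[ℂ] (Gamma k m →₀ W) :=
  Finsupp.lsum ℂ fun p : Gamma k m =>
    Finsupp.lsingle (r + p) ∘ₗ
      (I r + (∑ i, (barZ (r : Fin k ⊕ Fin k → ℤ) i : ℂ) *
        (β i + ((p : Fin k ⊕ Fin k → ℤ) i : ℂ))) • (LinearMap.id : W →ₗ[ℂ] W))

/-- `δ(u)`, for `u ∈ ℂⁿ`: `δ(u)(w ⊗ t^p) = ⟨u, α + p⟩ w ⊗ t^p`. -/
def deltaOp {k : ℕ} {m : Fin k ⊕ Fin k → ℕ} (W : Type*) [AddCommGroup W] [Module ℂ W]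
    (α : Fin k ⊕ Fin k → ℂ) (u : Fin k ⊕ Fin k → ℂ) :
    (Gamma k m →₀ W) →ₗ[ℂ] (Gamma k m →₀ W) :=
  Finsupp.lsum ℂ fun p : Gamma k m =>
    (∑ i, u i * (α i + ((p : Fin k ⊕ Fin k → ℤ) i : ℂ))) • Finsupp.lsingle p

/-- `μ(r)`, for `r ∈ Γ`: `μ(r)(w ⊗ t^p) = w ⊗ t^{r+p}` (multiplication by the monomial `t^r`). -/
def muOp {k : ℕ} {m : Fin k ⊕ Fin k → ℕ} (W : Type*) [AddCommGroup W] [Module ℂ W]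
    (r : Gamma k m) : (Gamma k m →₀ W) →ₗ[ℂ] (Gamma k m →₀ W) :=
  Finsupp.lsum ℂ fun p : Gamma k m => (Finsupp.lsingle (r + p) : W →ₗ[ℂ] Gamma k m →₀ W)

/-!
A nonzero invariant subspace `U` of `L(W)` is a sum of weight spaces for the operators `δ(u)`,
whose weights `⟨u, α + p⟩` separate the points `p ∈ Γ`; so `U` contains a nonzero pure tensor
`w ⊗ t^p`. Translating by the `μ(r)` shows that `{w | w ⊗ t^0 ∈ U}` is stable under each `I(r)`
(the scalar part of `π(r)` is already in `U`), hence is all of `W` by irreducibility, and then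
`U` contains every `w ⊗ t^p`.
-/

open Finsupp

section Separation

variable {ι K W : Type*} [Field K] [AddCommGroup W] [Module K W]

theorem Submodule.exists_single_mem_of_separating (U : Submodule K (ι →₀ W))
    (hsep : ∀ p q : ι, p ≠ q → ∃ (T : (ι →₀ W) →ₗ[K] (ι →₀ W)) (c : ι → K),
      c p ≠ c q ∧ (∀ f ∈ U, T f ∈ U) ∧ ∀ f s, T f s = c s • f s)
    {f : ι →₀ W} (hfU : f ∈ U) (hf : f ≠ 0) :
    ∃ p w, w ≠ 0 ∧ single p w ∈ U := by
  classical
  induction hn : f.support.card using Nat.strong_induction_on generalizing f with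
  | _ n ih =>
  have hpos : 0 < n := hn ▸ Finset.card_pos.mpr (support_nonempty_iff.mpr hf)
  obtain h1 | h1 := eq_or_lt_of_le (Nat.one_le_iff_ne_zero.mpr hpos.ne')
  · obtain ⟨a, ha, hfa⟩ := card_support_eq_one.mp (hn.trans h1.symm)
    exact ⟨a, f a, ha, hfa ▸ hfU⟩
  obtain ⟨p, hp, q, hq, hpq⟩ := Finset.one_lt_card.mp (hn ▸ h1)
  obtain ⟨T, c, hc, hTU, hT⟩ := hsep p q hpq
  -- `g` kills the `q`-component of `f` and keeps its `p`-component.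
  set g := T f - c q • f
  have hg : ∀ s, g s = (c s - c q) • f s := fun s => by simp [g, hT, sub_smul]
  have hgp : g p ≠ 0 := by
    rw [hg]; exact smul_ne_zero (sub_ne_zero.mpr hc) (mem_support_iff.mp hp)
  have hsupp : g.support ⊆ f.support.erase q := fun s hs => by
    rw [mem_support_iff, hg] at hs
    refine Finset.mem_erase.mpr ⟨?_, mem_support_iff.mpr (right_ne_zero_of_smul hs)⟩
    rintro rfl; simp at hs
  have hlt : g.support.card < n := by
    have := Finset.card_le_card hsupp
    rw [Finset.card_erase_of_mem hq, hn] at this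
    omega
  have hgU : g ∈ U := sub_mem (hTU f hfU) (U.smul_mem _ hfU)
  have hg0 : g ≠ 0 := fun h => hgp (by rw [h, Finsupp.zero_apply])
  exact ih _ hlt hgU hg0 rfl

end Separation

theorem Submodule.eq_top_of_forall_single_mem {ι K W : Type*} [Semiring K] [AddCommMonoid W]
    [Module K W] (U : Submodule K (ι →₀ W)) (h : ∀ p w, single p w ∈ U) : U = ⊤ :=
  eq_top_iff.mpr fun f _ =>
    f.induction_linear U.zero_mem (fun _ _ => add_mem) h

section LaurentModule

variable {k : ℕ} {m : Fin k ⊕ Fin k → ℕ} {W : Type*} [AddCommGroup W] [Module ℂ W]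

theorem piOp_single (I : Gamma k m → Module.End ℂ W) (β : Fin k ⊕ Fin k → ℂ) (r p : Gamma k m)
    (w : W) :
    piOp I β r (single p w) =
      single (r + p) (I r w + (∑ i, (barZ (r : Fin k ⊕ Fin k → ℤ) i : ℂ) *
        (β i + ((p : Fin k ⊕ Fin k → ℤ) i : ℂ))) • w) := by
  simp [piOp]

theorem muOp_single (r p : Gamma k m) (w : W) : muOp W r (single p w) = single (r + p) w := by
  simp [muOp]

theorem deltaOp_piSingle_apply (α : Fin k ⊕ Fin k → ℂ) (i : Fin k ⊕ Fin k) (f : Gamma k m →₀ W)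
    (s : Gamma k m) :
    deltaOp W α (Pi.single i 1) f s = (α i + ((s : Fin k ⊕ Fin k → ℤ) i : ℂ)) • f s := by
  induction f using Finsupp.induction_linear with
  | zero => simp
  | add f g hf hg => simp [hf, hg, smul_add]
  | single p w =>
    by_cases hps : p = s
    · subst hps; simp [deltaOp, Pi.single_apply]
    · simp [deltaOp, hps]

variable {U : Submodule ℂ (Gamma k m →₀ W)}

theorem single_mem_of_muOp_invariant (hμ : ∀ r, ∀ f ∈ U, muOp W r f ∈ U) {p : Gamma k m} {w : W}
    (h : single p w ∈ U) (q : Gamma k m) : single q w ∈ U := by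
  simpa [muOp_single] using hμ (q - p) _ h

theorem apply_mem_comap_lsingle_zero (I : Gamma k m → Module.End ℂ W) (hI0 : I 0 = 0)
    (β : Fin k ⊕ Fin k → ℂ) (hπ : ∀ r, r ≠ 0 → ∀ f ∈ U, piOp I β r f ∈ U)
    (hμ : ∀ r, ∀ f ∈ U, muOp W r f ∈ U) (r : Gamma k m) (x : W)
    (hx : x ∈ U.comap (lsingle 0)) : I r x ∈ U.comap (lsingle 0) := by
  obtain rfl | hr := eq_or_ne r 0
  · simp [hI0]
  rw [Submodule.mem_comap, lsingle_apply] at hx ⊢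
  have hπx := hπ r hr _ hx
  rw [piOp_single, add_zero] at hπx
  generalize (∑ i : Fin k ⊕ Fin k, _ : ℂ) = c at hπx
  have hcx : single r (c • x) ∈ U := by
    simpa [smul_single] using U.smul_mem c (single_mem_of_muOp_invariant hμ hx r)
  have hIx : single r (I r x) ∈ U := by simpa [← single_sub] using sub_mem hπx hcx
  exact single_mem_of_muOp_invariant hμ hIx 0

end LaurentModule

theorem stmt8_general (k : ℕ) (m : Fin k ⊕ Fin k → ℕ)
    (W : Type*) [AddCommGroup W] [Module ℂ W]
    (I : Gamma k m → Module.End ℂ W) (hI0 : I 0 = 0)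
    (hirr : ∀ U : Submodule ℂ W, (∀ r : Gamma k m, ∀ w ∈ U, I r w ∈ U) → U = ⊥ ∨ U = ⊤)
    (α β : Fin k ⊕ Fin k → ℂ) :
    ∀ U : Submodule ℂ (Gamma k m →₀ W),
      (∀ r : Gamma k m, r ≠ 0 → ∀ f ∈ U, piOp I β r f ∈ U) →
      (∀ u : Fin k ⊕ Fin k → ℂ, ∀ f ∈ U, deltaOp W α u f ∈ U) →
      (∀ r : Gamma k m, ∀ f ∈ U, muOp W r f ∈ U) →
      U = ⊥ ∨ U = ⊤ := by
  intro U hπ hδ hμ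
  refine or_iff_not_imp_left.mpr fun hU => ?_
  have hsep : ∀ p q : Gamma k m, p ≠ q → ∃ (T : (Gamma k m →₀ W) →ₗ[ℂ] _) (c : Gamma k m → ℂ),
      c p ≠ c q ∧ (∀ f ∈ U, T f ∈ U) ∧ ∀ f s, T f s = c s • f s := by
    intro p q hpq
    obtain ⟨i, hi⟩ := Function.ne_iff.mp (Subtype.coe_injective.ne hpq)
    exact ⟨deltaOp W α (Pi.single i 1), fun s => α i + ((s : Fin k ⊕ Fin k → ℤ) i : ℂ),
      by simpa using hi, hδ _, deltaOp_piSingle_apply α i⟩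
  obtain ⟨f, hfU, hf⟩ := Submodule.exists_mem_ne_zero_of_ne_bot hU
  obtain ⟨p, w, hw, hpw⟩ := U.exists_single_mem_of_separating hsep hfU hf
  have hV : U.comap (lsingle 0) = ⊤ := by
    refine (hirr _ (apply_mem_comap_lsingle_zero I hI0 β hπ hμ)).resolve_left fun hbot => hw ?_
    rw [← Submodule.mem_bot ℂ, ← hbot]
    exact single_mem_of_muOp_invariant hμ hpw 0
  exact U.eq_top_of_forall_single_mem fun q x =>
    single_mem_of_muOp_invariant hμ (hV ▸ Submodule.mem_top : x ∈ U.comap (lsingle 0)) q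

/-- if `W` is a nonzero finite dimensional irreducible module for the family
`I(r)` (satisfying `I(0) = 0` and `[I(r),I(s)] = ⟨r̄,s⟩(I(r+s) − I(r) − I(s))`), then for any
`α, β ∈ ℂⁿ` the only subspaces of `L(W) = W ⊗ ℂ[Γ]` invariant under all the operators
`π(r)` (`0 ≠ r ∈ Γ`), `δ(u)` (`u ∈ ℂⁿ`) and `μ(r)` (`r ∈ Γ`) are `0` and `L(W)`. -/
theorem stmt8 (k : ℕ) (hk : 1 ≤ k) (m : Fin k ⊕ Fin k → ℕ) (hm : ∀ i, 0 < m i)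
    (W : Type*) [AddCommGroup W] [Module ℂ W] [FiniteDimensional ℂ W] [Nontrivial W]
    (I : Gamma k m → Module.End ℂ W) (hI0 : I 0 = 0)
    (hbr : ∀ r s : Gamma k m,
      ⁅I r, I s⁆ = pairZ (barZ (r : Fin k ⊕ Fin k → ℤ)) (s : Fin k ⊕ Fin k → ℤ) •
        (I (r + s) - I r - I s))
    (hirr : ∀ U : Submodule ℂ W, (∀ r : Gamma k m, ∀ w ∈ U, I r w ∈ U) → U = ⊥ ∨ U = ⊤)
    (α β : Fin k ⊕ Fin k → ℂ) :
    ∀ U : Submodule ℂ (Gamma k m →₀ W),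
      (∀ r : Gamma k m, r ≠ 0 → ∀ f ∈ U, piOp I β r f ∈ U) →
      (∀ u : Fin k ⊕ Fin k → ℂ, ∀ f ∈ U, deltaOp W α u f ∈ U) →
      (∀ r : Gamma k m, ∀ f ∈ U, muOp W r f ∈ U) →
      U = ⊥ ∨ U = ⊤ :=
  stmt8_general k m W I hI0 hirr α β
end
end

section
/- Let k ≥ 1 and fix positive integers m_1,…,m_{2k}; let Γ = {r ∈ ℤ^{2k} : m_i divides r_i for all i}. Then the ℂ-linear span of the outer-product matrices { r·r̄ᵀ : r ∈ Γ } is the full symplectic Lie algebra 𝔰𝔭_{2k}(ℂ). -/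
noncomputable section

open scoped BigOperators Matrix

/-!
Since `r̄ = -(r ᵥ* J)`, we have `r·r̄ᵀ = -(r·rᵀ) J`, and `S ↦ -S J` maps the symmetric matrices
onto `𝔰𝔭_{2k}` (its inverse is `A ↦ A J`). So it suffices that the `r·rᵀ`, `r ∈ Γ`, span the
symmetric matrices. By polarization, `(r+s)(r+s)ᵀ - r rᵀ - s sᵀ = r sᵀ + s rᵀ`; this expression is
bilinear, so its values on `span Γ = ℂ^{2k}` stay in the span, and every symmetric `S` equals
`½ ∑ᵢ (eᵢ Sᵢᵀ + Sᵢ eᵢᵀ)`.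
-/

open Matrix Submodule

theorem add_swap_mem_span_image_diag {R M N : Type*} [CommRing R] [AddCommGroup M] [Module R M]
    [AddCommGroup N] [Module R N] (B : M →ₗ[R] M →ₗ[R] N) (L : AddSubmonoid M) {x y : M}
    (hx : x ∈ span R (L : Set M)) (hy : y ∈ span R (L : Set M)) :
    B x y + B y x ∈ span R ((fun v => B v v) '' L) := by
  have hle : map₂ (B + B.flip) (span R L) (span R L) ≤ span R ((fun v => B v v) '' L) := by
    rw [map₂_span_span, span_le]
    rintro _ ⟨a, ha, b, hb, rfl⟩
    have hpolar : (B + B.flip) a b = B (a + b) (a + b) - B a a - B b b := by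
      simp only [LinearMap.add_apply, LinearMap.flip_apply, map_add]
      abel
    change (B + B.flip) a b ∈ _
    rw [hpolar]
    exact sub_mem (sub_mem (subset_span ⟨_, L.add_mem ha hb, rfl⟩) (subset_span ⟨a, ha, rfl⟩))
      (subset_span ⟨b, hb, rfl⟩)
  exact hle (apply_mem_map₂ _ hx hy)

section Symmetric

variable {R ι : Type*} [CommRing R] [Fintype ι] [DecidableEq ι]

theorem Matrix.IsSymm.eq_invOf_two_smul_sum [Invertible (2 : R)] {S : Matrix ι ι R}
    (hS : S.IsSymm) :
    S = ⅟(2 : R) • ∑ i, (vecMulVec (Pi.single i 1) (S i) + vecMulVec (S i) (Pi.single i 1)) := by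
  ext p q
  simp [sum_apply, vecMulVec_apply, Pi.single_apply, Finset.sum_add_distrib, hS.apply p q,
    ← two_mul]

theorem span_vecMulVec_self_eq_isSymm [Invertible (2 : R)] (L : AddSubmonoid (ι → R))
    (hL : span R (L : Set (ι → R)) = ⊤) :
    (span R ((fun v : ι → R => vecMulVec v v) '' (L : Set (ι → R))) : Set (Matrix ι ι R)) =
      {S | S.IsSymm} := by
  ext S
  constructor
  · intro hS
    induction hS using span_induction with
    | mem _ h => obtain ⟨v, -, rfl⟩ := h; exact transpose_vecMulVec v v
    | zero => exact isSymm_zero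
    | add _ _ _ _ h₁ h₂ => exact h₁.add h₂
    | smul c _ _ h => exact h.smul c
  · intro hS
    rw [SetLike.mem_coe, hS.eq_invOf_two_smul_sum]
    refine smul_mem _ _ (sum_mem fun i _ => ?_)
    have h := add_swap_mem_span_image_diag (vecMulVecBilin R R) L (x := Pi.single i 1) (y := S i)
      (hL ▸ mem_top) (hL ▸ mem_top)
    simpa only [vecMulVecBilin_apply_apply] using h

end Symmetric

def divisibilityLattice {ι : Type*} (K : Type*) [Ring K] (m : ι → ℕ) : AddSubmonoid (ι → K) where
  carrier := {v | ∃ r : ι → ℤ, (∀ i, (m i : ℤ) ∣ r i) ∧ v = fun i => (r i : K)}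
  add_mem' := by
    rintro _ _ ⟨r, hr, rfl⟩ ⟨s, hs, rfl⟩
    exact ⟨r + s, fun i => dvd_add (hr i) (hs i), by ext; simp⟩
  zero_mem' := ⟨0, fun _ => dvd_zero _, by ext; simp⟩

theorem span_divisibilityLattice_eq_top {ι K : Type*} [Fintype ι] [DecidableEq ι] [Field K]
    [CharZero K] {m : ι → ℕ} (hm : ∀ i, m i ≠ 0) :
    span K (divisibilityLattice K m : Set (ι → K)) = ⊤ := by
  rw [eq_top_iff, ← (Pi.basisFun K ι).span_eq, span_le]
  rintro _ ⟨i, rfl⟩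
  have hmem : Pi.single i (m i : K) ∈ divisibilityLattice K m :=
    ⟨Pi.single i (m i : ℤ), fun j => by by_cases h : j = i <;> simp [h], by
      ext j; by_cases h : j = i <;> simp [h]⟩
  have hsingle : Pi.basisFun K ι i = (m i : K)⁻¹ • Pi.single i (m i : K) := by
    ext j; by_cases h : j = i <;> simp [h, hm i]
  rw [hsingle]
  exact smul_mem _ _ (subset_span hmem)

section Symplectic

variable {k : ℕ}

theorem vecMul_Jmat (v : Fin k ⊕ Fin k → ℂ) : v ᵥ* Jmat k = -bar v := by
  ext (i | i) <;>
    simp [Jmat, bar, vecMul, dotProduct, Fintype.sum_sum_type, fromBlocks, one_apply]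

theorem Jmat_transpose : (Jmat k)ᵀ = -Jmat k := by
  simp [Jmat, fromBlocks_transpose, fromBlocks_neg]

theorem Jmat_mul_Jmat : Jmat k * Jmat k = -1 := by
  simp [Jmat, fromBlocks_multiply, ← fromBlocks_one, fromBlocks_neg]

theorem vecMulVec_bar (v : Fin k ⊕ Fin k → ℂ) :
    vecMulVec v (bar v) = -(vecMulVec v v * Jmat k) := by
  rw [vecMulVec_mul, vecMul_Jmat, vecMulVec_neg, neg_neg]

theorem setOf_symplectic_eq_image_isSymm :
    {A | Aᵀ * Jmat k + Jmat k * A = 0} = (fun S => -(S * Jmat k)) '' {S | S.IsSymm} := by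
  ext A
  constructor
  · intro hA
    have hAt : Aᵀ = Jmat k * A * Jmat k :=
      calc Aᵀ = -(Aᵀ * Jmat k * Jmat k) := by simp [Matrix.mul_assoc, Jmat_mul_Jmat]
        _ = Jmat k * A * Jmat k := by simp [eq_neg_of_add_eq_zero_left hA]
    refine ⟨A * Jmat k, ?_, by simp [Matrix.mul_assoc, Jmat_mul_Jmat]⟩
    change (A * Jmat k)ᵀ = A * Jmat k
    simp [transpose_mul, Jmat_transpose, hAt, ← Matrix.mul_assoc, Jmat_mul_Jmat]
  · rintro ⟨S, hS, rfl⟩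
    simp [transpose_neg, transpose_mul, Jmat_transpose, hS.eq, Matrix.mul_assoc]

end Symplectic

theorem stmt12_general (k : ℕ) (m : Fin k ⊕ Fin k → ℕ) (hm : ∀ i, 0 < m i) :
    (Submodule.span ℂ
        {A : Matrix (Fin k ⊕ Fin k) (Fin k ⊕ Fin k) ℂ |
          ∃ r : Fin k ⊕ Fin k → ℤ, (∀ i, (m i : ℤ) ∣ r i) ∧
            A = Matrix.vecMulVec (fun i => (r i : ℂ)) (bar fun i => (r i : ℂ))} :
      Set (Matrix (Fin k ⊕ Fin k) (Fin k ⊕ Fin k) ℂ))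
      = {A | Aᵀ * Jmat k + Jmat k * A = 0} := by
  set f := -LinearMap.mulRight ℂ (Jmat k)
  have hgen : {A : Matrix (Fin k ⊕ Fin k) (Fin k ⊕ Fin k) ℂ |
      ∃ r : Fin k ⊕ Fin k → ℤ, (∀ i, (m i : ℤ) ∣ r i) ∧
        A = vecMulVec (fun i => (r i : ℂ)) (bar fun i => (r i : ℂ))} =
      f '' ((fun v => vecMulVec v v) '' (divisibilityLattice ℂ m : Set _)) := by
    ext A
    constructor
    · rintro ⟨r, hr, rfl⟩
      exact ⟨_, ⟨_, ⟨r, hr, rfl⟩, rfl⟩, (vecMulVec_bar _).symm⟩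
    · rintro ⟨_, ⟨_, ⟨r, hr, rfl⟩, rfl⟩, rfl⟩
      exact ⟨r, hr, (vecMulVec_bar _).symm⟩
  rw [hgen, span_image, map_coe,
    span_vecMulVec_self_eq_isSymm _ (span_divisibilityLattice_eq_top fun i => (hm i).ne'),
    setOf_symplectic_eq_image_isSymm]
  rfl

/-- the `ℂ`-span of the outer products `r·r̄ᵀ`, for `r` ranging over the
lattice `Γ = {r ∈ ℤ^{2k} : m_i ∣ r_i}`, is the full symplectic Lie algebra
`𝔰𝔭_{2k}(ℂ) = {A : Aᵀ J + J A = 0}`. -/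
theorem stmt12 (k : ℕ) (hk : 1 ≤ k) (m : Fin k ⊕ Fin k → ℕ) (hm : ∀ i, 0 < m i) :
    (Submodule.span ℂ
        {A : Matrix (Fin k ⊕ Fin k) (Fin k ⊕ Fin k) ℂ |
          ∃ r : Fin k ⊕ Fin k → ℤ, (∀ i, (m i : ℤ) ∣ r i) ∧
            A = Matrix.vecMulVec (fun i => (r i : ℂ)) (bar fun i => (r i : ℂ))} :
      Set (Matrix (Fin k ⊕ Fin k) (Fin k ⊕ Fin k) ℂ))
      = {A | Aᵀ * Jmat k + Jmat k * A = 0} :=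
  stmt12_general k m hm
end
end
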